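/- Let G be a connected finite simple graph of order n ≥ 13 with degree sequence d₁ ≤ ⋯ ≤ d_n satisfying the weak Chvátal condition (for all 1 ≤ i < n/2, d_i ≥ i + 1 or d_{n−i} ≥ n − i − 1), having at most one vertex of degree 1, and with m(G,2) > 2. Let L = {v ∈ V(G) : d(v) ≥ (n−1)/2}, and let I be a set of maximum cardinality among all closures ⟨A⟩ of two-element sets A ⊆ V(G) under 2-neighbor bootstrap percolation that have nonempty intersection with L. Then |I| ≤ (n+1)/2. -/

import Mathlib

/-!
Suppose `2 * #I ≥ n + 2` and put `B = V \ I`, `k = #B`, so `#I ≥ k + 2`. As `I` is closed,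
every vertex of `B` has at most one neighbour in `I`, hence degree at most `k`; the weak Chvátal
condition at `i = k` then yields a set `H` of `k + 1` vertices of degree at least `#I - 1`, all
lying in `I ∩ L`. There are at most `k` edges between `H` and `B`, so some `v₀ ∈ H` is
adjacent to exactly `I \ {v₀}`. Take an edge `wu` leaving `I` and `J = ⟨{v₀, u}⟩`; maximality
of `I` gives `#J ≤ #I`. A vertex of `I \ J` sees no vertex of `J` except `v₀`, which forces
every vertex of `H \ {v₀}` to have a neighbour in `B`. So there are exactly `k` edges between
`H` and `B`, every vertex of `B` has its neighbour in `I` inside `H`, and `I \ J = {y}`,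
`J \ I = {u}` with `y ∉ H`. Then `y` and `u` both have degree `1`.
-/

open Finset
open scoped Classical

/-- One step of the `r`-neighbor bootstrap percolation process: all currently
active vertices stay active, and every vertex with at least `r` active
neighbors becomes active. -/
noncomputable def bootStep {V : Type*} [Fintype V] (G : SimpleGraph V) (r : ℕ)
    (A : Finset V) : Finset V :=
  A ∪ Finset.univ.filter (fun v => r ≤ (G.neighborFinset v ∩ A).card)

/-- The closure of `A` under `r`-neighbor bootstrap percolation, i.e. `⋃ₜ Aₜ`.
Since the process is monotone on a finite vertex set, iterating `|V|` times
reaches the fixed point. -/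
noncomputable def bootClosure {V : Type*} [Fintype V] (G : SimpleGraph V) (r : ℕ)
    (A : Finset V) : Finset V :=
  (bootStep G r)^[Fintype.card V] A

/-- `G` `r`-percolates from the initially active set `A`. -/
def Percolates {V : Type*} [Fintype V] (G : SimpleGraph V) (r : ℕ)
    (A : Finset V) : Prop :=
  ∃ t : ℕ, (bootStep G r)^[t] A = Finset.univ

/-- `m(G, r)`: the minimum size of an `r`-contagious set in `G`. -/
noncomputable def minContagious {V : Type*} [Fintype V] (G : SimpleGraph V) (r : ℕ) : ℕ :=
  sInf {k : ℕ | ∃ A : Finset V, A.card = k ∧ Percolates G r A}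

open SimpleGraph

section Bootstrap

variable {V : Type*} [Fintype V]

lemma Finset.isFixedPt_iterate_card {f : Finset V → Finset V} (hf : ∀ s, s ⊆ f s)
    (A : Finset V) : Function.IsFixedPt f (f^[Fintype.card V] A) := by
  have key : ∀ t, Function.IsFixedPt f (f^[t] A) ∨ t ≤ #(f^[t] A) := by
    intro t
    induction t with
    | zero => exact Or.inr (Nat.zero_le _)
    | succ t ih =>
      rw [Function.iterate_succ_apply']
      by_cases hfix : Function.IsFixedPt f (f^[t] A)
      · exact Or.inl (by rw [hfix.eq]; exact hfix)
      · have := card_lt_card ((hf _).ssubset_of_ne (Ne.symm hfix))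
        exact Or.inr (by have := ih.resolve_left hfix; omega)
  refine (key _).elim id fun h => ?_
  have huniv := eq_univ_of_card _ (le_antisymm (card_le_univ _) h)
  rw [Function.IsFixedPt, huniv]
  exact eq_univ_of_forall fun x => hf _ (mem_univ x)

variable (G : SimpleGraph V) (r : ℕ)

lemma subset_bootStep (A : Finset V) : A ⊆ bootStep G r A := subset_union_left

lemma bootStep_bootClosure (A : Finset V) :
    bootStep G r (bootClosure G r A) = bootClosure G r A :=
  Finset.isFixedPt_iterate_card (subset_bootStep G r) A

lemma subset_bootClosure (A : Finset V) : A ⊆ bootClosure G r A :=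
  Function.id_le_iterate_of_id_le (subset_bootStep G r) _ A

variable {G r} {S : Finset V} {y a b : V}

lemma mem_of_le_card_neighborFinset_inter (hS : bootStep G r S = S)
    (h : r ≤ #(G.neighborFinset y ∩ S)) : y ∈ S := by
  rw [← hS]
  exact mem_union_right _ (mem_filter.mpr ⟨mem_univ _, h⟩)

lemma mem_of_adj_of_adj (hS : bootStep G 2 S = S) (hab : a ≠ b) (ha : a ∈ S) (hb : b ∈ S)
    (hya : G.Adj y a) (hyb : G.Adj y b) : y ∈ S := by
  refine mem_of_le_card_neighborFinset_inter hS ((card_pair hab).symm.trans_le (card_le_card ?_))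
  simp [insert_subset_iff, ha, hb, hya, hyb]

lemma eq_of_adj_of_adj (hS : bootStep G 2 S = S) (hy : y ∉ S) (ha : a ∈ S) (hb : b ∈ S)
    (hya : G.Adj y a) (hyb : G.Adj y b) : a = b := by
  by_contra hab
  exact hy (mem_of_adj_of_adj hS hab ha hb hya hyb)

lemma card_neighborFinset_inter_le_one (hS : bootStep G 2 S = S) (hy : y ∉ S) :
    #(G.neighborFinset y ∩ S) ≤ 1 := by
  by_contra h
  exact hy (mem_of_le_card_neighborFinset_inter hS (by omega))

lemma degree_le_card_compl (hS : bootStep G 2 S = S) (hy : y ∉ S) : G.degree y ≤ #Sᶜ := by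
  have hsub : G.neighborFinset y \ S ⊆ Sᶜ.erase y := fun x hx => by
    simp only [mem_sdiff, mem_neighborFinset] at hx
    simp [hx.2, hx.1.ne']
  have hout := card_le_card hsub
  rw [card_erase_of_mem (mem_compl.mpr hy)] at hout
  have hin := card_neighborFinset_inter_le_one hS hy
  have : 1 ≤ #Sᶜ := card_pos.mpr ⟨y, mem_compl.mpr hy⟩
  rw [← card_neighborFinset_eq_degree, ← card_inter_add_card_sdiff _ S]
  omega

end Bootstrap

section Graph

variable {V : Type*} [Fintype V] {G : SimpleGraph V}

lemma SimpleGraph.Connected.exists_adj_mem_notMem (hG : G.Connected) {S : Finset V}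
    (hS : S.Nonempty) (hS' : S ≠ univ) : ∃ w ∈ S, ∃ u ∉ S, G.Adj w u := by
  obtain ⟨x, hx⟩ := hS
  obtain ⟨y, hy⟩ := not_forall.mp (mt eq_univ_of_forall hS')
  obtain ⟨d, -, hd⟩ := (hG.preconnected x y).some.exists_boundary_dart (S : Set V) hx hy
  exact ⟨d.fst, hd.1, d.snd, hd.2, d.adj⟩

lemma card_erase_sdiff_neighborFinset_le {I : Finset V} {v : V} (hv : v ∈ I)
    (hdeg : #I - 1 ≤ G.degree v) :
    #(I.erase v \ G.neighborFinset v) ≤ #(G.neighborFinset v \ I) := by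
  have hsub : G.neighborFinset v ∩ I ⊆ I.erase v ∩ G.neighborFinset v := fun x hx => by
    simp only [mem_inter, mem_neighborFinset] at hx
    simp [hx.1, hx.2]
  have h1 := card_le_card hsub
  have h2 := card_sdiff_add_card_inter (I.erase v) (G.neighborFinset v)
  have h3 := card_inter_add_card_sdiff (G.neighborFinset v) I
  rw [card_erase_of_mem hv] at h2
  rw [card_neighborFinset_eq_degree] at h3
  omega

lemma sum_card_neighborFinset_sdiff_eq (H S : Finset V) :
    ∑ v ∈ H, #(G.neighborFinset v \ S) = ∑ b ∈ Sᶜ, #(G.neighborFinset b ∩ H) := by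
  have h1 : ∀ v, G.neighborFinset v \ S = {b ∈ Sᶜ | G.Adj v b} := fun v => by
    ext; simp [and_comm]
  have h2 : ∀ b, G.neighborFinset b ∩ H = {v ∈ H | G.Adj v b} := fun b => by
    ext; simp [and_comm, G.adj_comm]
  simp only [h1, h2, card_filter]
  exact sum_comm

lemma degree_eq_one_of_neighborFinset_subset [Nontrivial V] (hG : G.Connected) {x y : V}
    (h : G.neighborFinset y ⊆ {x}) : G.degree y = 1 := by
  have := hG.preconnected.degree_pos_of_nontrivial y
  have := card_le_card h
  rw [card_singleton, card_neighborFinset_eq_degree] at this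
  omega

variable {H S : Finset V}

lemma card_neighborFinset_inter_le_one_of_subset (hS : bootStep G 2 S = S) (hH : H ⊆ S)
    {b : V} (hb : b ∉ S) : #(G.neighborFinset b ∩ H) ≤ 1 :=
  (card_le_card (inter_subset_inter_left hH)).trans (card_neighborFinset_inter_le_one hS hb)

lemma sum_card_neighborFinset_sdiff_le (hS : bootStep G 2 S = S) (hH : H ⊆ S) :
    ∑ v ∈ H, #(G.neighborFinset v \ S) ≤ #Sᶜ := by
  rw [sum_card_neighborFinset_sdiff_eq, card_eq_sum_ones]
  exact sum_le_sum fun b hb =>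
    card_neighborFinset_inter_le_one_of_subset hS hH (mem_compl.mp hb)

lemma exists_adj_of_card_compl_le_sum (hS : bootStep G 2 S = S) (hH : H ⊆ S)
    (hsum : #Sᶜ ≤ ∑ v ∈ H, #(G.neighborFinset v \ S)) {b : V} (hb : b ∉ S) :
    ∃ v ∈ H, G.Adj b v := by
  by_contra! hnone
  have hb0 : #(G.neighborFinset b ∩ H) < 1 := by
    rw [Nat.lt_one_iff, card_eq_zero, eq_empty_iff_forall_notMem]
    intro v hv
    rw [mem_inter, mem_neighborFinset] at hv
    exact hnone v hv.2 hv.1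
  rw [sum_card_neighborFinset_sdiff_eq, card_eq_sum_ones] at hsum
  refine hsum.not_gt (sum_lt_sum (fun c hc => ?_) ⟨b, mem_compl.mpr hb, hb0⟩)
  exact card_neighborFinset_inter_le_one_of_subset hS hH (mem_compl.mp hc)

end Graph

section DegreeSequence

variable {n : ℕ}

-- `d ⟨i - 1, _⟩` is the paper's `dᵢ`: the sequence is indexed from `0`
def WeakChvatal (d : Fin n → ℕ) : Prop :=
  ∀ i : ℕ, ∀ h1 : 1 ≤ i, ∀ h2 : 2 * i < n,
    i + 1 ≤ d ⟨i - 1, by omega⟩ ∨ n - i - 1 ≤ d ⟨n - i - 1, by omega⟩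

lemma Monotone.le_of_lt_card {α : Type*} [Preorder α] {f : Fin n → α} (hf : Monotone f)
    {S : Finset (Fin n)} {c : α} (hS : ∀ j ∈ S, f j ≤ c) {i : Fin n} (hi : (i : ℕ) < #S) :
    f i ≤ c := by
  obtain ⟨j, hjS, hj⟩ :=
    exists_mem_notMem_of_card_lt_card (s := Iio i) (t := S) (by rwa [Fin.card_Iio])
  exact (hf (not_lt.mp (by simpa using hj))).trans (hS j hjS)

lemma WeakChvatal.le_of_card_le {d : Fin n → ℕ} (hC : WeakChvatal d) (hd : Monotone d)
    {S : Finset (Fin n)} (hS1 : 1 ≤ #S) (hS2 : 2 * #S < n) (hS : ∀ i ∈ S, d i ≤ #S)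
    {j : Fin n} (hj : n - #S - 1 ≤ (j : ℕ)) : n - #S - 1 ≤ d j := by
  have hlow : d ⟨#S - 1, by omega⟩ ≤ #S := hd.le_of_lt_card hS (show #S - 1 < #S by omega)
  refine ((hC #S hS1 hS2).resolve_left (by omega)).trans (hd ?_)
  exact Fin.mk_le_of_le_val hj

lemma exists_card_eq_forall_le_degree {V : Type*} [Fintype V] {G : SimpleGraph V} (e : Fin n ≃ V)
    (hmono : Monotone fun i => G.degree (e i)) (hchv : WeakChvatal fun i => G.degree (e i))
    {B : Finset V} (hB1 : 1 ≤ #B) (hB2 : 2 * #B < n) (hB : ∀ b ∈ B, G.degree b ≤ #B) :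
    ∃ H : Finset V, #H = #B + 1 ∧ ∀ v ∈ H, n - #B - 1 ≤ G.degree v := by
  have hS : #(B.map e.symm.toEmbedding) = #B := card_map _
  refine ⟨(Ici ⟨n - #B - 1, by omega⟩).map e.toEmbedding, by simp; omega, fun v hv => ?_⟩
  obtain ⟨j, hj, rfl⟩ := mem_map.mp hv
  have := hchv.le_of_card_le hmono (S := B.map e.symm.toEmbedding) (by omega) (by omega)
    (fun i hi => hS ▸ hB (e i) (by simpa using mem_map_equiv.mp hi))
    (j := j) (by simpa [hS, Fin.le_def] using mem_Ici.mp hj)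
  rwa [hS] at this

end DegreeSequence

section Closure

variable {V : Type*} [Fintype V] {G : SimpleGraph V} {I J H : Finset V} {v₀ u w y : V}

lemma exists_neighborFinset_eq_erase (hI : bootStep G 2 I = I) (hH : H ⊆ I)
    (hcard : #Iᶜ < #H) (hdeg : ∀ v ∈ H, #I - 1 ≤ G.degree v) :
    ∃ v₀ ∈ H, G.neighborFinset v₀ = I.erase v₀ := by
  obtain ⟨v, hvH, hv⟩ : ∃ v ∈ H, #(G.neighborFinset v \ I) < 1 := by
    refine exists_lt_of_sum_lt ?_
    rw [← card_eq_sum_ones]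
    exact (sum_card_neighborFinset_sdiff_le hI hH).trans_lt hcard
  have hout : G.neighborFinset v \ I = ∅ := card_eq_zero.mp (by omega)
  have hin : I.erase v \ G.neighborFinset v = ∅ := card_eq_zero.mp (by
    have := card_erase_sdiff_neighborFinset_le (hH hvH) (hdeg v hvH)
    omega)
  refine ⟨v, hvH, Subset.antisymm (fun x hx => ?_) (sdiff_eq_empty_iff_subset.mp hin)⟩
  exact mem_erase.mpr ⟨(mem_neighborFinset _ _ _ |>.mp hx).ne',
    sdiff_eq_empty_iff_subset.mp hout hx⟩

lemma not_adj_of_mem_sdiff (hJ : bootStep G 2 J = J) (hv₀J : v₀ ∈ J)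
    (hdom : G.neighborFinset v₀ = I.erase v₀) (hy : y ∈ I \ J) {z : V} (hz : z ∈ J)
    (hzv₀ : z ≠ v₀) : ¬ G.Adj y z := by
  obtain ⟨hyI, hyJ⟩ := mem_sdiff.mp hy
  have hyv₀ : G.Adj y v₀ := by
    rw [G.adj_comm, ← mem_neighborFinset, hdom]
    exact mem_erase.mpr ⟨fun h => hyJ (h ▸ hv₀J), hyI⟩
  exact fun hyz => hyJ (mem_of_adj_of_adj hJ hzv₀.symm hv₀J hz hyv₀ hyz)

lemma card_sdiff_le_card_neighborFinset_sdiff (hJ : bootStep G 2 J = J) (hv₀J : v₀ ∈ J)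
    (hdom : G.neighborFinset v₀ = I.erase v₀) {v : V} (hvI : v ∈ I) (hvJ : v ∈ J)
    (hvv₀ : v ≠ v₀) (hdeg : #I - 1 ≤ G.degree v) :
    #(I \ J) ≤ #(G.neighborFinset v \ I) := by
  refine (card_le_card fun z hz => ?_).trans (card_erase_sdiff_neighborFinset_le hvI hdeg)
  obtain ⟨hzI, hzJ⟩ := mem_sdiff.mp hz
  refine mem_sdiff.mpr ⟨mem_erase.mpr ⟨fun h => hzJ (h ▸ hvJ), hzI⟩, fun h => ?_⟩
  exact not_adj_of_mem_sdiff hJ hv₀J hdom hz hvJ hvv₀ ((mem_neighborFinset _ _ _).mp h).symm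

lemma card_erase_inter_le_card_neighborFinset_sdiff (hJ : bootStep G 2 J = J) (hv₀J : v₀ ∈ J)
    (hdom : G.neighborFinset v₀ = I.erase v₀) {v : V} (hv : v ∈ I \ J)
    (hdeg : #I - 1 ≤ G.degree v) : #((I ∩ J).erase v₀) ≤ #(G.neighborFinset v \ I) := by
  obtain ⟨hvI, hvJ⟩ := mem_sdiff.mp hv
  refine (card_le_card fun z hz => ?_).trans (card_erase_sdiff_neighborFinset_le hvI hdeg)
  obtain ⟨hzv₀, hzIJ⟩ := mem_erase.mp hz
  obtain ⟨hzI, hzJ⟩ := mem_inter.mp hzIJ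
  refine mem_sdiff.mpr ⟨mem_erase.mpr ⟨fun h => hvJ (h ▸ hzJ), hzI⟩, fun h => ?_⟩
  exact not_adj_of_mem_sdiff hJ hv₀J hdom hv hzJ hzv₀ ((mem_neighborFinset _ _ _).mp h)

lemma card_compl_le_sum_card_neighborFinset_sdiff (hHcard : #H = #Iᶜ + 1) (hv₀ : v₀ ∈ H)
    (hpos : ∀ v ∈ H.erase v₀, 1 ≤ #(G.neighborFinset v \ I)) :
    #Iᶜ ≤ ∑ v ∈ H, #(G.neighborFinset v \ I) := by
  have hcard : #(H.erase v₀) = #Iᶜ := by rw [card_erase_of_mem hv₀]; omega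
  calc #Iᶜ ≤ ∑ v ∈ H.erase v₀, #(G.neighborFinset v \ I) := by
        simpa [hcard] using card_nsmul_le_sum _ _ 1 hpos
    _ ≤ _ := sum_le_sum_of_subset (erase_subset _ _)

lemma card_neighborFinset_sdiff_eq_one (hI : bootStep G 2 I = I) (hH : H ⊆ I)
    (hHcard : #H = #Iᶜ + 1) (hv₀ : v₀ ∈ H)
    (hpos : ∀ v ∈ H.erase v₀, 1 ≤ #(G.neighborFinset v \ I)) :
    ∀ v ∈ H.erase v₀, #(G.neighborFinset v \ I) = 1 := by
  refine fun v hv => ((sum_eq_sum_iff_of_le hpos).mp (le_antisymm (sum_le_sum hpos) ?_) v hv).symm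
  have := sum_card_neighborFinset_sdiff_le hI hH
  have := sum_le_sum_of_subset (f := fun v => #(G.neighborFinset v \ I)) (erase_subset v₀ H)
  rw [sum_const, card_erase_of_mem hv₀, smul_eq_mul, mul_one]
  omega

lemma one_le_card_neighborFinset_sdiff (hJ : bootStep G 2 J = J) (hv₀J : v₀ ∈ J)
    (hdom : G.neighborFinset v₀ = I.erase v₀) (hD : (I \ J).Nonempty)
    (hw : w ∈ (I ∩ J).erase v₀) {v : V} (hv : v ∈ I.erase v₀)
    (hdeg : #I - 1 ≤ G.degree v) : 1 ≤ #(G.neighborFinset v \ I) := by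
  obtain ⟨hvv₀, hvI⟩ := mem_erase.mp hv
  by_cases hvJ : v ∈ J
  · exact (card_pos.mpr hD).trans_le
      (card_sdiff_le_card_neighborFinset_sdiff hJ hv₀J hdom hvI hvJ hvv₀ hdeg)
  · exact (card_pos.mpr ⟨w, hw⟩).trans_le (card_erase_inter_le_card_neighborFinset_sdiff
      hJ hv₀J hdom (mem_sdiff.mpr ⟨hvI, hvJ⟩) hdeg)

theorem exists_sdiff_eq_singleton_of_card_le (hI : bootStep G 2 I = I)
    (hJ : bootStep G 2 J = J) (hH : H ⊆ I) (hHcard : #H = #Iᶜ + 1)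
    (hHdeg : ∀ v ∈ H, #I - 1 ≤ G.degree v) (hv₀H : v₀ ∈ H)
    (hdom : G.neighborFinset v₀ = I.erase v₀) (hv₀J : v₀ ∈ J) (huI : u ∉ I)
    (huJ : u ∈ J) (hwI : w ∈ I) (hwu : G.Adj w u) (hJI : #J ≤ #I) (h4 : 4 ≤ #I) :
    (∀ b ∉ I, ∃ v ∈ H, G.Adj b v) ∧ ∃ y ∉ H, I \ J = {y} ∧ J \ I = {u} := by
  have hv₀I := hH hv₀H
  have hwv₀ : w ≠ v₀ := by
    rintro rfl
    exact huI (mem_of_mem_erase (hdom ▸ (mem_neighborFinset _ _ _).mpr hwu))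
  have hwJ : w ∈ J := by
    refine mem_of_adj_of_adj hJ (by rintro rfl; exact huI hv₀I) hv₀J huJ ?_ hwu
    rw [G.adj_comm, ← mem_neighborFinset, hdom]
    exact mem_erase.mpr ⟨hwv₀, hwI⟩
  have hcardI := card_sdiff_add_card_inter I J
  have hcardJ := card_sdiff_add_card_inter J I
  rw [inter_comm] at hcardJ
  have huJI : u ∈ J \ I := mem_sdiff.mpr ⟨huJ, huI⟩
  have hD : (I \ J).Nonempty := card_pos.mp (by have := card_pos.mpr ⟨u, huJI⟩; omega)
  have hpos : ∀ v ∈ H.erase v₀, 1 ≤ #(G.neighborFinset v \ I) := fun v hv =>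
    one_le_card_neighborFinset_sdiff hJ hv₀J hdom hD
      (mem_erase.mpr ⟨hwv₀, mem_inter.mpr ⟨hwI, hwJ⟩⟩)
      (erase_subset_erase v₀ hH hv) (hHdeg v (mem_of_mem_erase hv))
  have hnbr : ∀ b ∉ I, ∃ v ∈ H, G.Adj b v := fun b hb =>
    exists_adj_of_card_compl_le_sum hI hH
      (card_compl_le_sum_card_neighborFinset_sdiff hHcard hv₀H hpos) hb
  have hone := card_neighborFinset_sdiff_eq_one hI hH hHcard hv₀H hpos
  -- `w`, the only neighbour of `u` in `I`, lies in `H`: it has one neighbour outside `I` but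
  -- none in `I \ J`
  have hwH : w ∈ H := by
    obtain ⟨v, hvH, huv⟩ := hnbr u huI
    rwa [eq_of_adj_of_adj hI huI hwI (hH hvH) hwu.symm huv]
  obtain ⟨y, hy⟩ : ∃ y, I \ J = {y} := card_eq_one.mp <| le_antisymm
    (hone w (mem_erase.mpr ⟨hwv₀, hwH⟩) ▸
      card_sdiff_le_card_neighborFinset_sdiff hJ hv₀J hdom hwI hwJ hwv₀ (hHdeg w hwH))
    (card_pos.mpr hD)
  have hyIJ : y ∈ I \ J := hy ▸ mem_singleton_self y
  rw [hy, card_singleton] at hcardI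
  refine ⟨hnbr, y, fun hyH => ?_, hy, ?_⟩
  · have hyv₀ : y ≠ v₀ := by rintro rfl; exact (mem_sdiff.mp hyIJ).2 hv₀J
    have := hone y (mem_erase.mpr ⟨hyv₀, hyH⟩) ▸
      card_erase_inter_le_card_neighborFinset_sdiff hJ hv₀J hdom hyIJ (hHdeg y hyH)
    rw [card_erase_of_mem (mem_inter.mpr ⟨hv₀I, hv₀J⟩)] at this
    omega
  · have hJI1 : #(J \ I) ≤ 1 := by omega
    exact eq_singleton_iff_unique_mem.mpr ⟨huJI, fun z hz => card_le_one.mp hJI1 z hz u huJI⟩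

lemma neighborFinset_subset_of_sdiff_eq_singleton (hI : bootStep G 2 I = I)
    (hJ : bootStep G 2 J = J) (hH : H ⊆ I) (hv₀J : v₀ ∈ J)
    (hdom : G.neighborFinset v₀ = I.erase v₀) (hnbr : ∀ b ∉ I, ∃ v ∈ H, G.Adj b v)
    (hyH : y ∉ H) (hy : I \ J = {y}) : G.neighborFinset y ⊆ {v₀} := by
  intro z hz
  rw [mem_neighborFinset] at hz
  have hyIJ : y ∈ I \ J := hy ▸ mem_singleton_self y
  by_cases hzI : z ∈ I
  · have hzJ : z ∈ J := by
      by_contra hzJ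
      have := hy ▸ mem_sdiff.mpr ⟨hzI, hzJ⟩
      exact hz.ne' (mem_singleton.mp this)
    by_contra hzv₀
    exact not_adj_of_mem_sdiff hJ hv₀J hdom hyIJ hzJ (mem_singleton.not.mp hzv₀) hz
  · obtain ⟨v, hvH, hzv⟩ := hnbr z hzI
    exact absurd (eq_of_adj_of_adj hI hzI (mem_sdiff.mp hyIJ).1 (hH hvH) hz.symm hzv ▸ hvH) hyH

lemma neighborFinset_subset_of_sdiff_eq_singleton_of_notMem (hI : bootStep G 2 I = I)
    (hJ : bootStep G 2 J = J) (hH : H ⊆ I) (hHJ : H ⊆ J)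
    (hnbr : ∀ b ∉ I, ∃ v ∈ H, G.Adj b v) (huI : u ∉ I) (hu : J \ I = {u}) (hwI : w ∈ I)
    (hwu : G.Adj w u) :
    G.neighborFinset u ⊆ {w} := by
  intro z hz
  rw [mem_neighborFinset] at hz
  by_cases hzI : z ∈ I
  · exact mem_singleton.mpr (eq_of_adj_of_adj hI huI hzI hwI hz hwu.symm)
  · obtain ⟨v, hvH, hzv⟩ := hnbr z hzI
    have huJ : u ∈ J := (mem_sdiff.mp (hu ▸ mem_singleton_self u)).1
    have hzJ : z ∈ J :=
      mem_of_adj_of_adj hJ (by rintro rfl; exact huI (hH hvH)) huJ (hHJ hvH) hz.symm hzv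
    exact absurd (mem_singleton.mp (hu ▸ mem_sdiff.mpr ⟨hzJ, hzI⟩)) hz.ne'

theorem card_lt_card_of_bootStep_eq (hG : G.Connected)
    (hdeg1 : #{v | G.degree v = 1} ≤ 1) (hI : bootStep G 2 I = I) (hJ : bootStep G 2 J = J)
    (hH : H ⊆ I) (hHcard : #H = #Iᶜ + 1) (hHdeg : ∀ v ∈ H, #I - 1 ≤ G.degree v)
    (hv₀H : v₀ ∈ H) (hdom : G.neighborFinset v₀ = I.erase v₀) (hv₀J : v₀ ∈ J)
    (huI : u ∉ I) (huJ : u ∈ J) (hwI : w ∈ I) (hwu : G.Adj w u) (h4 : 4 ≤ #I) :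
    #I < #J := by
  by_contra! hJI
  obtain ⟨hnbr, y, hyH, hy, hu⟩ :=
    exists_sdiff_eq_singleton_of_card_le hI hJ hH hHcard hHdeg hv₀H hdom hv₀J huI huJ hwI hwu
      hJI h4
  have hyI : y ∈ I := (mem_sdiff.mp (hy ▸ mem_singleton_self y)).1
  have hHJ : H ⊆ J := fun v hv => by
    by_contra hvJ
    exact hyH (mem_singleton.mp (hy ▸ mem_sdiff.mpr ⟨hH hv, hvJ⟩) ▸ hv)
  have : Nontrivial V := ⟨⟨u, y, fun h => huI (h ▸ hyI)⟩⟩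
  have hy1 := degree_eq_one_of_neighborFinset_subset hG
    (neighborFinset_subset_of_sdiff_eq_singleton hI hJ hH hv₀J hdom hnbr hyH hy)
  have hu1 := degree_eq_one_of_neighborFinset_subset hG
    (neighborFinset_subset_of_sdiff_eq_singleton_of_notMem hI hJ hH hHJ hnbr huI hu hwI hwu)
  have hsub : ({u, y} : Finset V) ⊆ ({v | G.degree v = 1} : Finset V) := by
    simp [insert_subset_iff, hu1, hy1]
  have := card_le_card hsub
  rw [card_pair (by rintro rfl; exact huI hyI)] at this
  omega

theorem exists_card_lt_card_bootClosure_pair (hG : G.Connected)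
    (hdeg1 : #{v | G.degree v = 1} ≤ 1) (hI : bootStep G 2 I = I) (hIu : I ≠ univ)
    (hsize : #Iᶜ + 2 ≤ #I) (h4 : 4 ≤ #I) (hHcard : #H = #Iᶜ + 1)
    (hHdeg : ∀ v ∈ H, #I - 1 ≤ G.degree v) :
    ∃ v₀ ∈ H, ∃ u, v₀ ≠ u ∧ #I < #(bootClosure G 2 {v₀, u}) := by
  have hH : H ⊆ I := fun v hv => by
    by_contra h
    have := degree_le_card_compl hI h
    have := hHdeg v hv
    omega
  obtain ⟨v₀, hv₀H, hdom⟩ := exists_neighborFinset_eq_erase hI hH (by omega) hHdeg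
  obtain ⟨w, hwI, u, huI, hwu⟩ := hG.exists_adj_mem_notMem ⟨v₀, hH hv₀H⟩ hIu
  refine ⟨v₀, hv₀H, u, by rintro rfl; exact huI (hH hv₀H), ?_⟩
  exact card_lt_card_of_bootStep_eq hG hdeg1 hI (bootStep_bootClosure G 2 _) hH hHcard hHdeg
    hv₀H hdom (subset_bootClosure G 2 _ (mem_insert_self _ _)) huI
    (subset_bootClosure G 2 _ (by simp)) hwI hwu h4

end Closure

theorem stmt12 {V : Type*} [Fintype V] (G : SimpleGraph V)
    (hconn : G.Connected)
    (n : ℕ) (hcard : Fintype.card V = n) (hn : 13 ≤ n)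
    (e : Fin n ≃ V)
    (hmono : ∀ i j : Fin n, i ≤ j → G.degree (e i) ≤ G.degree (e j))
    (hchv : ∀ i : ℕ, ∀ h1 : 1 ≤ i, ∀ h2 : 2 * i < n,
      i + 1 ≤ G.degree (e ⟨i - 1, by omega⟩) ∨
      n - i - 1 ≤ G.degree (e ⟨n - i - 1, by omega⟩))
    (hdeg1 : (Finset.univ.filter (fun v => G.degree v = 1)).card ≤ 1)
    (hm : 2 < minContagious G 2)
    (L : Finset V) (hL : L = Finset.univ.filter (fun v => n - 1 ≤ 2 * G.degree v))
    (I : Finset V)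
    (hIcl : ∃ A : Finset V, A.card = 2 ∧ I = bootClosure G 2 A)
    (hImax : ∀ A : Finset V, A.card = 2 → (bootClosure G 2 A ∩ L).Nonempty →
      (bootClosure G 2 A).card ≤ I.card) :
    2 * I.card ≤ n + 1 := by
  obtain ⟨A, hA, rfl⟩ := hIcl
  have hI := bootStep_bootClosure G 2 A
  have hIu : bootClosure G 2 A ≠ univ := fun h => by
    have : minContagious G 2 ≤ 2 := Nat.sInf_le ⟨A, hA, Fintype.card V, h⟩
    omega
  by_contra! hbig
  have hsplit := card_add_card_compl (bootClosure G 2 A)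
  have hcompl : 1 ≤ #(bootClosure G 2 A)ᶜ :=
    card_pos.mpr (nonempty_iff_ne_empty.mpr (mt (compl_eq_empty_iff _).mp hIu))
  obtain ⟨H, hHcard, hHdeg⟩ := exists_card_eq_forall_le_degree e hmono hchv hcompl
    (by omega) fun b hb => degree_le_card_compl hI (mem_compl.mp hb)
  obtain ⟨v₀, hv₀H, u, hv₀u, hlt⟩ :=
    exists_card_lt_card_bootClosure_pair hconn hdeg1 hI hIu (by omega) (by omega) hHcard
      fun v hv => (hHdeg v hv).trans' (by omega)
  have hv₀L : v₀ ∈ L := by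
    rw [hL, mem_filter]
    exact ⟨mem_univ _, by have := hHdeg v₀ hv₀H; omega⟩
  have hv₀J : v₀ ∈ bootClosure G 2 {v₀, u} := subset_bootClosure G 2 _ (mem_insert_self _ _)
  have := hImax {v₀, u} (card_pair hv₀u) ⟨v₀, mem_inter.mpr ⟨hv₀J, hv₀L⟩⟩
  omega
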